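/- arXiv:1707.08704 — 4 statements merged into one kernel-verified Lean document; each statement's English description precedes it below -/
import Mathlib

section
/- Let D be a finite nonempty type and let B be a compact convex set of functions ψ' : D → ℝ such that every ψ' ∈ B is nonnegative and has positive total sum ∑_{d ∈ D} ψ'(d) > 0. Then 𝒩(B) equals the convex hull of 𝒩(ext(B)), where ext(B) denotes the set of extreme points of B and 𝒩 is the normalization operator 𝒩(S) = { ψ' / (∑_{d ∈ D} ψ'(d)) : ψ' ∈ S }. -/
/-!
Minkowski's theorem: a compact convex set `s` in finite dimension is the convex hull of its extreme
points. By induction on the dimension of `s`: a point of `s` that cannot be pushed further along a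
direction of `s` lies in a proper exposed face, and every point of `s` lies on a segment between two
such points. On the other side, `x ↦ (f x)⁻¹ • x` for a linear functional `f` maps segments in
`{f > 0}` onto segments, hence commutes with convex hulls there; normalizing `B = conv (ext B)`
therefore gives the theorem.
-/

open Set Module Filter Topology Pointwise

noncomputable def normSet {D : Type*} [Fintype D] (S : Set (D → ℝ)) : Set (D → ℝ) :=
  {g | ∃ ψ' ∈ S, g = (∑ d, ψ' d)⁻¹ • ψ'}

section TopologicalVectorSpace

variable {E : Type*} [AddCommGroup E] [Module ℝ E] [TopologicalSpace E] [IsTopologicalAddGroup E]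
  [ContinuousSMul ℝ E] [T2Space E]

theorem IsCompact.exists_add_smul_mem_forall_add_smul_notMem {s : Set E} (hs : IsCompact s)
    {x v : E} (hx : x ∈ s) (hv : v ≠ 0) :
    ∃ t : ℝ, 0 ≤ t ∧ x + t • v ∈ s ∧ ∀ t' : ℝ, 0 < t' → x + t • v + t' • v ∉ s := by
  have hT : IsCompact ((fun t : ℝ => x + t • v) ⁻¹' s) :=
    ((Homeomorph.addLeft x).isClosedEmbedding.comp
      (isClosedEmbedding_smul_left hv)).isCompact_preimage hs
  obtain ⟨t, htT, htmax⟩ := hT.exists_isGreatest ⟨0, by simpa using hx⟩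
  refine ⟨t, htmax (by simpa using hx), htT, fun t' ht' hmem => ?_⟩
  have := htmax (show x + (t + t') • v ∈ s by rwa [add_smul, ← add_assoc])
  linarith

end TopologicalVectorSpace

section FiniteDimensional

variable {E : Type*} [NormedAddCommGroup E] [NormedSpace ℝ E] [FiniteDimensional ℝ E]

theorem Convex.exists_forall_le_of_forall_add_smul_notMem {s : Set E} (hs : Convex ℝ s) {y v : E}
    (hy : y ∈ s) (hv : v ∈ vectorSpan ℝ s) (hout : ∀ t : ℝ, 0 < t → y + t • v ∉ s) :
    ∃ l : StrongDual ℝ E, (∀ p ∈ s, l p ≤ l y) ∧ ∃ p ∈ s, l p < l y := by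
  obtain ⟨U, hU⟩ := (vectorSpan ℝ s).exists_isCompl
  -- Thickening `s` along a complement of its direction creates interior, but keeps `y` off it.
  set K : Set E := s + (U : Set E)
  have hK : Convex ℝ K := hs.add U.convex
  have hsK : s ⊆ K := subset_add_left s U.zero_mem
  have hspan : vectorSpan ℝ K = ⊤ := by
    rw [eq_top_iff, ← hU.sup_eq_top]
    refine sup_le (vectorSpan_mono ℝ hsK) fun u hu => ?_
    simpa using vsub_mem_vectorSpan ℝ (add_mem_add hy hu) (hsK hy)
  have hint : (interior K).Nonempty := by
    rwa [hK.interior_nonempty_iff_affineSpan_eq_top,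
      AffineSubspace.affineSpan_eq_top_iff_vectorSpan_eq_top_of_nonempty ℝ E E ⟨y, hsK hy⟩]
  have houtK : ∀ t : ℝ, 0 < t → y + t • v ∉ K := by
    rintro t ht ⟨p, hp, u, hu, hpu⟩
    have huW : u ∈ vectorSpan ℝ s := by
      have hu_eq : u = (y -ᵥ p) + t • v := by
        rw [vsub_eq_sub]
        linear_combination (norm := module) hpu
      exact hu_eq ▸ add_mem (vsub_mem_vectorSpan ℝ hy hp) (Submodule.smul_mem _ t hv)
    have hu0 : u = 0 := (Submodule.disjoint_def.1 hU.disjoint) u huW hu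
    subst hu0
    exact hout t ht (by simpa [← hpu] using hp)
  have hyK : y ∉ interior K := fun hyK => by
    have hpath : Tendsto (fun t : ℝ => y + t • v) (𝓝[>] 0) (𝓝 y) := by
      have hc : Continuous fun t : ℝ => y + t • v := by fun_prop
      exact (hc.tendsto' 0 y (by simp)).mono_left nhdsWithin_le_nhds
    obtain ⟨t, hmem, ht⟩ :=
      ((hpath.eventually (isOpen_interior.mem_nhds hyK)).and self_mem_nhdsWithin).exists
    exact houtK t ht (interior_subset hmem)
  obtain ⟨l, hl⟩ := geometric_hahn_banach_open_point hK.interior isOpen_interior hyK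
  have hle : ∀ p ∈ K, l p ≤ l y := by
    refine fun p hp => closure_minimal (fun a ha => (hl a ha).le)
      (isClosed_le l.continuous continuous_const) ?_
    rw [hK.closure_interior_eq_closure_of_nonempty_interior hint]
    exact subset_closure hp
  have hU0 : ∀ u ∈ U, l u = 0 := fun u hu => by
    have h₁ := hle _ (add_mem_add hy hu)
    have h₂ := hle _ (add_mem_add hy (neg_mem hu))
    rw [map_add] at h₁ h₂
    rw [map_neg] at h₂
    linarith
  obtain ⟨q, hq⟩ := hint
  obtain ⟨p, hp, u, hu, rfl⟩ := interior_subset hq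
  refine ⟨l, fun p hp => hle p (hsK hp), p, hp, ?_⟩
  simpa [hU0 u hu] using hl _ hq

theorem finrank_vectorSpan_toExposed_lt {s : Set E} (l : StrongDual ℝ E) {p q : E} (hp : p ∈ s)
    (hq : q ∈ s) (hpq : l p < l q) :
    finrank ℝ (vectorSpan ℝ (l.toExposed s)) < finrank ℝ (vectorSpan ℝ s) := by
  refine Submodule.finrank_lt_finrank_of_lt
    (lt_of_le_of_ne (vectorSpan_mono ℝ fun x hx => hx.1) fun h => ?_)
  have hker : vectorSpan ℝ (l.toExposed s) ≤ LinearMap.ker l.toLinearMap := by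
    rw [vectorSpan_def, Submodule.span_le]
    rintro _ ⟨a, ha, b, hb, rfl⟩
    simp [le_antisymm (hb.2 a ha.1) (ha.2 b hb.1)]
  have hzero : l (q - p) = 0 := hker (h ▸ vsub_mem_vectorSpan ℝ hq hp)
  rw [map_sub] at hzero
  linarith

theorem subset_convexHull_extremePoints {s : Set E} (hs : IsCompact s) (hconv : Convex ℝ s) :
    s ⊆ convexHull ℝ (s.extremePoints ℝ) := by
  induction hn : finrank ℝ (vectorSpan ℝ s) using Nat.strong_induction_on generalizing s with
  | _ n ih =>
  have hface : ∀ y ∈ s, ∀ v ∈ vectorSpan ℝ s, (∀ t : ℝ, 0 < t → y + t • v ∉ s) →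
      y ∈ convexHull ℝ (s.extremePoints ℝ) := by
    intro y hy v hv hout
    obtain ⟨l, hle, p, hp, hlt⟩ := hconv.exists_forall_le_of_forall_add_smul_notMem hy hv hout
    have hF : IsExposed ℝ s (l.toExposed s) := ContinuousLinearMap.toExposed.isExposed
    exact convexHull_mono hF.isExtreme.extremePoints_subset_extremePoints
      (ih _ (hn ▸ finrank_vectorSpan_toExposed_lt l hp hy hlt) (hF.isCompact hs)
        (hF.convex hconv) rfl ⟨hy, hle⟩)
  intro x hx
  by_cases hbot : vectorSpan ℝ s = ⊥
  · have hsub := (vectorSpan_eq_bot_iff_subsingleton ℝ).1 hbot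
    exact subset_convexHull ℝ _
      (mem_extremePoints.2 ⟨hx, fun _ h₁ _ h₂ _ => ⟨hsub h₁ hx, hsub h₂ hx⟩⟩)
  obtain ⟨v, hv, hv0⟩ := Submodule.exists_mem_ne_zero_of_ne_bot hbot
  obtain ⟨a, ha, hya, hay⟩ := hs.exists_add_smul_mem_forall_add_smul_notMem hx hv0
  obtain ⟨b, hb, hzb, hbz⟩ := hs.exists_add_smul_mem_forall_add_smul_notMem hx (neg_ne_zero.2 hv0)
  have hxseg : x ∈ segment ℝ (x + b • -v) (x + a • v) := by
    rw [mem_segment_iff_sameRay]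
    simpa using (SameRay.sameRay_nonneg_smul_left v hb).nonneg_smul_right ha
  exact (convex_convexHull ℝ _).segment_subset (hface _ hzb (-v) (neg_mem hv) hbz)
    (hface _ hya v hv hay) hxseg

theorem convexHull_extremePoints {s : Set E} (hs : IsCompact s) (hconv : Convex ℝ s) :
    convexHull ℝ (s.extremePoints ℝ) = s :=
  (convexHull_min extremePoints_subset hconv).antisymm (subset_convexHull_extremePoints hs hconv)

end FiniteDimensional

section Normalize

variable {𝕜 E : Type*} [Field 𝕜] [LinearOrder 𝕜] [IsStrictOrderedRing 𝕜] [AddCommGroup E]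
  [Module 𝕜 E] (f : E →ₗ[𝕜] 𝕜)

def normalizeBy (x : E) : E := (f x)⁻¹ • x

variable {f}

theorem normalizeBy_image_segment {x y : E} (hx : 0 < f x) (hy : 0 < f y) :
    normalizeBy f '' segment 𝕜 x y = segment 𝕜 (normalizeBy f x) (normalizeBy f y) := by
  apply subset_antisymm
  · rintro _ ⟨_, ⟨a, b, ha, hb, hab, rfl⟩, rfl⟩
    have hpos : 0 < a * f x + b * f y := (convex_Ioi 0) hx hy ha hb hab
    refine mem_segment_iff_div.2 ⟨a * f x, b * f y, by positivity, by positivity, hpos, ?_⟩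
    simp only [normalizeBy, map_add, map_smul, smul_eq_mul]
    match_scalars <;> field_simp
  · rintro _ ⟨a, b, ha, hb, hab, rfl⟩
    have hpos : 0 < a / f x + b / f y := by
      simpa [div_eq_mul_inv] using (convex_Ioi 0) (inv_pos.2 hx) (inv_pos.2 hy) ha hb hab
    refine ⟨_, mem_segment_iff_div.2
      ⟨a / f x, b / f y, by positivity, by positivity, hpos, rfl⟩, ?_⟩
    simp only [normalizeBy, map_add, map_smul, smul_eq_mul]
    have hden : a * f y + f x * b ≠ 0 := by
      have : 0 < a * f y + b * f x := (convex_Ioi 0) hy hx ha hb hab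
      linarith
    match_scalars <;> field_simp <;> rw [hab, mul_one]

theorem Convex.normalizeBy_image {S : Set E} (hS : Convex 𝕜 S) (hpos : ∀ x ∈ S, 0 < f x) :
    Convex 𝕜 (normalizeBy f '' S) := by
  refine convex_iff_segment_subset.2 ?_
  rintro _ ⟨x, hx, rfl⟩ _ ⟨y, hy, rfl⟩
  rw [← normalizeBy_image_segment (hpos x hx) (hpos y hy)]
  exact image_mono (hS.segment_subset hx hy)

theorem normalizeBy_image_convexHull {S : Set E} (hpos : ∀ x ∈ S, 0 < f x) :
    normalizeBy f '' convexHull 𝕜 S = convexHull 𝕜 (normalizeBy f '' S) := by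
  have hposHull : convexHull 𝕜 S ⊆ {x | 0 < f x} :=
    convexHull_min hpos ((convex_Ioi 0).linear_preimage f)
  apply subset_antisymm
  · set C := {x | 0 < f x} ∩ normalizeBy f ⁻¹' convexHull 𝕜 (normalizeBy f '' S)
    have hC : Convex 𝕜 C := by
      refine convex_iff_segment_subset.2 fun x hx y hy z hz => ?_
      refine mem_inter ?_ ?_
      · exact (convex_Ioi 0).linear_preimage f |>.segment_subset hx.1 hy.1 hz
      · refine (convex_convexHull 𝕜 _).segment_subset hx.2 hy.2 ?_
        rw [← normalizeBy_image_segment hx.1 hy.1]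
        exact mem_image_of_mem _ hz
    have hSC : S ⊆ C := fun x hx => ⟨hpos x hx, subset_convexHull 𝕜 _ (mem_image_of_mem _ hx)⟩
    rw [image_subset_iff]
    exact (convexHull_min hSC hC).trans inter_subset_right
  · exact convexHull_min (image_mono (subset_convexHull 𝕜 S))
      ((convex_convexHull 𝕜 S).normalizeBy_image hposHull)

end Normalize

theorem normSet_eq_image_normalizeBy {D : Type*} [Fintype D] (S : Set (D → ℝ)) :
    normSet S = normalizeBy (∑ d, LinearMap.proj d : (D → ℝ) →ₗ[ℝ] ℝ) '' S := by
  ext g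
  simp [normSet, normalizeBy, eq_comm]

theorem normSet_eq_convexHull_normSet_extremePoints_general
    (D : Type*) [Fintype D]
    (B : Set (D → ℝ)) (hB : Convex ℝ B) (hBcomp : IsCompact B)
    (hsum : ∀ ψ' ∈ B, 0 < ∑ d, ψ' d) :
    normSet B = convexHull ℝ (normSet (Set.extremePoints ℝ B)) := by
  have hpos : ∀ ψ ∈ B.extremePoints ℝ, 0 < (∑ d, LinearMap.proj d : (D → ℝ) →ₗ[ℝ] ℝ) ψ :=
    fun ψ hψ => by simpa using hsum ψ hψ.1
  rw [normSet_eq_image_normalizeBy, normSet_eq_image_normalizeBy,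
    ← normalizeBy_image_convexHull hpos, convexHull_extremePoints hBcomp hB]

/-- For a compact convex set `B` of nonnegative functions with positive total sums,
`𝒩(B)` is the convex hull of `𝒩(ext(B))`. -/
theorem normSet_eq_convexHull_normSet_extremePoints
    (D : Type*) [Fintype D] [Nonempty D]
    (B : Set (D → ℝ)) (hB : Convex ℝ B) (hBcomp : IsCompact B)
    (hnonneg : ∀ ψ' ∈ B, ∀ d, 0 ≤ ψ' d)
    (hsum : ∀ ψ' ∈ B, 0 < ∑ d, ψ' d) :
    normSet B = convexHull ℝ (normSet (Set.extremePoints ℝ B)) :=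
  normSet_eq_convexHull_normSet_extremePoints_general D B hB hBcomp hsum
end

section
/- Let D be a finite nonempty type and let B be a compact convex set of functions ψ' : D → ℝ such that every ψ' ∈ B is nonnegative and has positive total sum ∑_{d ∈ D} ψ'(d) > 0. Then every extreme point of the normalized set 𝒩(B) belongs to 𝒩(ext(B)); that is, ext(𝒩(B)) ⊆ 𝒩(ext(B)), where ext denotes the set of extreme points and 𝒩 is the normalization operator 𝒩(S) = { ψ' / (∑_{d ∈ D} ψ'(d)) : ψ' ∈ S }. -/
/-!
Write `n x = (σ x)⁻¹ • x` for the normalization by a linear functional `σ` that is positive on `B`.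
Given an extreme point `g` of `n '' B`, the fibre `{x ∈ B | n x = g}` is a nonempty compact set,
so by the Krein–Milman lemma it has an extreme point `φ`. Since `n` maps open segments into open
segments, an open segment of `B` through `φ` is sent to one through `g`; its endpoints therefore
lie in the fibre and coincide with `φ`. So `φ` is extreme in `B`, and `n φ = g`.
-/

open Set

section Normalization

variable {E : Type*} [AddCommGroup E] [Module ℝ E]

theorem inv_smul_mem_openSegment_of_mem_openSegment (σ : E →ₗ[ℝ] ℝ) {x y z : E}
    (hx : 0 < σ x) (hy : 0 < σ y) (hz : z ∈ openSegment ℝ x y) :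
    (σ z)⁻¹ • z ∈ openSegment ℝ ((σ x)⁻¹ • x) ((σ y)⁻¹ • y) := by
  obtain ⟨a, b, ha, hb, -, rfl⟩ := hz
  have hσz : σ (a • x + b • y) = a * σ x + b * σ y := by simp
  have hpos : 0 < a * σ x + b * σ y := by positivity
  refine ⟨a * σ x / (a * σ x + b * σ y), b * σ y / (a * σ x + b * σ y),
    by positivity, by positivity, by field_simp, ?_⟩
  rw [hσz]
  match_scalars <;> field_simp

theorem mem_extremePoints_of_mem_extremePoints_fiber (σ : E →ₗ[ℝ] ℝ) {B : Set E}
    (hpos : ∀ x ∈ B, 0 < σ x) {g φ : E}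
    (hg : g ∈ extremePoints ℝ ((fun x ↦ (σ x)⁻¹ • x) '' B))
    (hφ : φ ∈ extremePoints ℝ {x ∈ B | (σ x)⁻¹ • x = g}) :
    φ ∈ extremePoints ℝ B := by
  refine ⟨hφ.1.1, fun x₁ hx₁ x₂ hx₂ hseg ↦ ?_⟩
  have hgseg : g ∈ openSegment ℝ ((σ x₁)⁻¹ • x₁) ((σ x₂)⁻¹ • x₂) :=
    hφ.1.2 ▸ inv_smul_mem_openSegment_of_mem_openSegment σ (hpos x₁ hx₁) (hpos x₂ hx₂) hseg
  obtain ⟨h₁, h₂⟩ := (mem_extremePoints.1 hg).2 _ (mem_image_of_mem _ hx₁) _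
    (mem_image_of_mem _ hx₂) hgseg
  exact hφ.2 ⟨hx₁, h₁⟩ ⟨hx₂, h₂⟩ hseg

variable [TopologicalSpace E] [T2Space E] [IsTopologicalAddGroup E] [ContinuousSMul ℝ E]
  [LocallyConvexSpace ℝ E]

theorem extremePoints_image_inv_smul_subset (σ : E →L[ℝ] ℝ) {B : Set E} (hB : IsCompact B)
    (hpos : ∀ x ∈ B, 0 < σ x) :
    extremePoints ℝ ((fun x ↦ (σ x)⁻¹ • x) '' B) ⊆
      (fun x ↦ (σ x)⁻¹ • x) '' extremePoints ℝ B := by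
  intro g hg
  obtain ⟨ψ, hψB, hψg⟩ := hg.1
  have hfibre : {x ∈ B | (σ x)⁻¹ • x = g} = B ∩ {x | x = σ x • g} := by
    ext x
    exact and_congr_right fun hx ↦ inv_smul_eq_iff₀ (hpos x hx).ne'
  have hfibre_compact : IsCompact {x ∈ B | (σ x)⁻¹ • x = g} := by
    rw [hfibre]
    exact hB.inter_right (isClosed_eq continuous_id (σ.continuous.smul continuous_const))
  obtain ⟨φ, hφ⟩ := hfibre_compact.extremePoints_nonempty ⟨ψ, hψB, hψg⟩
  exact ⟨φ, mem_extremePoints_of_mem_extremePoints_fiber σ.toLinearMap hpos hg hφ, hφ.1.2⟩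

end Normalization

theorem normSet_eq_image {D : Type*} [Fintype D] (S : Set (D → ℝ)) :
    normSet S =
      (fun ψ ↦ ((∑ d, ContinuousLinearMap.proj d : (D → ℝ) →L[ℝ] ℝ) ψ)⁻¹ • ψ) '' S := by
  ext g
  simp [normSet, eq_comm]

theorem extremePoints_normSet_subset_general
    (D : Type*) [Fintype D]
    (B : Set (D → ℝ)) (hBcomp : IsCompact B)
    (hsum : ∀ ψ' ∈ B, 0 < ∑ d, ψ' d) :
    Set.extremePoints ℝ (normSet B) ⊆ normSet (Set.extremePoints ℝ B) := by
  rw [normSet_eq_image, normSet_eq_image]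
  exact extremePoints_image_inv_smul_subset _ hBcomp (by simpa using hsum)

/-- For a compact convex set `B` of nonnegative functions with positive total sums,
every extreme point of `𝒩(B)` belongs to `𝒩(ext(B))`. -/
theorem extremePoints_normSet_subset
    (D : Type*) [Fintype D] [Nonempty D]
    (B : Set (D → ℝ)) (hB : Convex ℝ B) (hBcomp : IsCompact B)
    (hnonneg : ∀ ψ' ∈ B, ∀ d, 0 ≤ ψ' d)
    (hsum : ∀ ψ' ∈ B, 0 < ∑ d, ψ' d) :
    Set.extremePoints ℝ (normSet B) ⊆ normSet (Set.extremePoints ℝ B) :=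
  extremePoints_normSet_subset_general D B hBcomp hsum
end

section
/- Let V be a finite type, let n ∈ ℕ, let S₁, …, Sₙ be finite types, and let φ : V × (Π_{j=1}^n S_j) → ℝ. Define the map T sending a tuple of functions (ψ₁, …, ψₙ), with ψ_j : S_j → ℝ, to the function T(ψ₁, …, ψₙ) : V → ℝ given by T(ψ₁, …, ψₙ)(v) = ∑_{s ∈ Π_j S_j} φ(v, s) · ∏_{j=1}^n ψ_j(s_j). For each j let E_j be a finite set of functions S_j → ℝ. If ψ_j lies in the convex hull of E_j for every j, then T(ψ₁, …, ψₙ) lies in the convex hull of the finite set { T(e₁, …, eₙ) : e_j ∈ E_j for each j }. -/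
/-- The Belief Propagation message computation is multi-convex in the incoming
sub-messages: if each sub-message `ψ j` lies in the convex hull of a finite set of
extrema `E j`, then the outgoing message lies in the convex hull of the messages
computed from combinations of extrema. -/
theorem message_mem_convexHull_of_submessages_mem_convexHull
    (V : Type*) [Fintype V] (n : ℕ)
    (S : Fin n → Type*) [∀ j, Fintype (S j)]
    (φ : V × (∀ j, S j) → ℝ)
    (T : (∀ j, S j → ℝ) → (V → ℝ))
    (hT : ∀ ψ v, T ψ v = ∑ s : ∀ j, S j, φ (v, s) * ∏ j, ψ j (s j))
    (E : ∀ j, Finset (S j → ℝ))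
    (ψ : ∀ j, S j → ℝ)
    (hψ : ∀ j, ψ j ∈ convexHull ℝ (↑(E j) : Set (S j → ℝ))) :
    T ψ ∈ convexHull ℝ {g : V → ℝ | ∃ e : ∀ j, S j → ℝ,
      (∀ j, e j ∈ E j) ∧ g = T e} := by
  classical
  -- extract convex weights for each j
  have hw : ∀ j, ∃ w : (S j → ℝ) → ℝ, (∀ x ∈ E j, 0 ≤ w x) ∧
      (∑ x ∈ E j, w x = 1) ∧ (∑ x ∈ E j, w x • x) = ψ j := by
    intro j
    have := (Finset.mem_convexHull).1 (hψ j)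
    obtain ⟨w, h0, h1, h2⟩ := this
    refine ⟨w, h0, h1, ?_⟩
    rw [Finset.centerMass_eq_of_sum_1 _ _ h1] at h2
    simpa using h2
  choose w hw0 hw1 hw2 using hw
  set P : Finset (∀ j, S j → ℝ) := Fintype.piFinset E with hP
  set W : (∀ j, S j → ℝ) → ℝ := fun e => ∏ j, w j (e j) with hW
  have hWsum : ∑ e ∈ P, W e = 1 := by
    rw [hP, hW, ← Finset.prod_univ_sum]
    simp [hw1]
  have key : T ψ = ∑ e ∈ P, W e • T e := by
    funext v
    rw [hT]
    have hpt : ∀ s : ∀ j, S j, (∏ j, ψ j (s j))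
        = ∑ e ∈ P, ∏ j, (w j (e j) * e j (s j)) := by
      intro s
      rw [hP]
      rw [← Finset.prod_univ_sum E (fun j x => w j x * x (s j))]
      refine Finset.prod_congr rfl fun j _ => ?_
      have := congrFun (hw2 j) (s j)
      simp only [Finset.sum_apply, Pi.smul_apply, smul_eq_mul] at this
      rw [← this]
    simp only [Finset.sum_apply, Pi.smul_apply, smul_eq_mul]
    calc ∑ s : ∀ j, S j, φ (v, s) * ∏ j, ψ j (s j)
        = ∑ s : ∀ j, S j, ∑ e ∈ P, φ (v, s) * ((∏ j, w j (e j)) * ∏ j, e j (s j)) := by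
          refine Finset.sum_congr rfl fun s _ => ?_
          rw [hpt s, Finset.mul_sum]
          refine Finset.sum_congr rfl fun e _ => ?_
          rw [Finset.prod_mul_distrib]
      _ = ∑ e ∈ P, W e * T e v := by
          rw [Finset.sum_comm]
          refine Finset.sum_congr rfl fun e _ => ?_
          rw [hT, Finset.mul_sum]
          refine Finset.sum_congr rfl fun s _ => ?_
          ring
  rw [key, ← Finset.centerMass_eq_of_sum_1 _ _ hWsum]
  refine Finset.centerMass_mem_convexHull _ ?_ ?_ ?_
  · intro e he
    rw [hP, Fintype.mem_piFinset] at he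
    exact Finset.prod_nonneg fun j _ => hw0 j _ (he j)
  · rw [hWsum]; norm_num
  · intro e he
    rw [hP, Fintype.mem_piFinset] at he
    exact ⟨e, he, rfl⟩
end

section
/- Let ι be a finite type indexing variables, with each variable i ∈ ι taking values in a finite nonempty type X i. A factor is a function φ : (Π_{i ∈ ι} X i) → ℝ together with a set Var(φ) ⊆ ι such that φ(x) = φ(y) whenever x and y agree on Var(φ). Let M be a finite set of factors, let V ∈ ι, and let C ⊆ ι with V ∉ C. Suppose M is partitioned into nonempty disjoint blocks Pt¹, …, Ptⁿ such that: (1) for all i ≠ j, Var(Ptⁱ) ∩ Var(Ptʲ) ⊆ C ∪ {V}, where Var(Ptʲ) is the union of Var(φ) over φ ∈ Ptʲ; and (2) every variable of ι other than V and the variables of C occurs in Var(Ptʲ) for exactly one j. Then for every value v ∈ X V: ∑_{x : x(V) = v} ∏_{φ ∈ M} φ(x) = ∑_{c : assignments to C} ∏_{j=1}^n ( ∑_{y : assignments to Var(Ptʲ) \ (C ∪ {V})} ∏_{φ ∈ Ptʲ} φ(x_{v,c,y}) ), where x_{v,c,y} denotes any full assignment agreeing with v on V, with c on C, and with y on Var(Ptʲ)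 \ (C ∪ {V}) (the value of each φ ∈ Ptʲ is well-defined since φ depends only on Var(φ) ⊆ Var(Ptʲ) ∪ C ∪ {V}). -/
/-- The sum-product factorization identity underlying Belief Propagation with
Separator Conditioning.  The factors (indexed by `K`) are partitioned into nonempty
blocks (fibers of `blk`); any two distinct blocks share variables only inside the
separator `C` (or the target variable `V`), and every variable other than `V` and
those in `C` occurs in exactly one block.  Then the global sum-product of the model
with `V` fixed to `v` equals a sum over assignments of the separator `C` of the
product over blocks of per-block sum-products. -/
theorem sum_product_factorization_separator_conditioning
    (ι : Type*) [Fintype ι] [DecidableEq ι]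
    (X : ι → Type*) [∀ i, Fintype (X i)] [∀ i, Nonempty (X i)]
    [∀ i, DecidableEq (X i)]
    -- the finite set of factors, indexed by `K`
    (K : Type*) [Fintype K]
    (φ : K → (∀ i, X i) → ℝ) (vars : K → Finset ι)
    (hdep : ∀ k (x y : ∀ i, X i), (∀ i ∈ vars k, x i = y i) → φ k x = φ k y)
    -- the target variable and the separator
    (V : ι) (C : Finset ι) (hVC : V ∉ C)
    -- the partition of the factors into `n` nonempty blocks
    (n : ℕ) (blk : K → Fin n)
    (hblk_surj : ∀ j : Fin n, ∃ k : K, blk k = j)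
    -- the variables of each block
    (VarBlk : Fin n → Finset ι)
    (hVarBlk : ∀ j, VarBlk j =
      (Finset.univ.filter (fun k => blk k = j)).biUnion vars)
    -- (1) distinct blocks only share variables in `C ∪ {V}`
    (hsep : ∀ j j' : Fin n, j ≠ j' →
      ∀ i ∈ VarBlk j ∩ VarBlk j', i ∈ insert V C)
    -- (2) every variable other than `V` and those in `C` occurs in exactly one block
    (hcover : ∀ i : ι, i ≠ V → i ∉ C → ∃! j : Fin n, i ∈ VarBlk j)
    -- `glue v c j y` is any full assignment agreeing with `v` on `V`, with `c` on
    -- `C`, and with `y` on `VarBlk j \ (C ∪ {V})`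
    (glue : (v : X V) → ((i : {i : ι // i ∈ C}) → X i.1) → (j : Fin n) →
      ((i : {i : ι // i ∈ VarBlk j \ insert V C}) → X i.1) → (∀ i, X i))
    (hglueV : ∀ v c j y, glue v c j y V = v)
    (hglueC : ∀ v c j y i (hi : i ∈ C), glue v c j y i = c ⟨i, hi⟩)
    (hglueY : ∀ v c j y i (hi : i ∈ VarBlk j \ insert V C),
      glue v c j y i = y ⟨i, hi⟩) :
    ∀ v : X V,
      (∑ x : {x : ∀ i, X i // x V = v}, ∏ k : K, φ k x.1) =
        ∑ c : (i : {i : ι // i ∈ C}) → X i.1,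
          ∏ j : Fin n,
            ∑ y : (i : {i : ι // i ∈ VarBlk j \ insert V C}) → X i.1,
              ∏ k ∈ Finset.univ.filter (fun k => blk k = j),
                φ k (glue v c j y) := by
  intro v
  classical
  -- the block of each variable outside `C ∪ {V}`
  let J : ∀ i : ι, i ≠ V → i ∉ C → Fin n := fun i h h' => (hcover i h h').choose
  have hJmem : ∀ i h h', i ∈ VarBlk (J i h h') :=
    fun i h h' => (hcover i h h').choose_spec.1
  have hJuniq : ∀ i h h' j, i ∈ VarBlk j → j = J i h h' :=
    fun i h h' j hj => (hcover i h h').choose_spec.2 j hj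
  -- reconstruction of a full assignment from separator + per-block assignments
  let back : ((i : {i : ι // i ∈ C}) → X i.1) →
      ((j : Fin n) → (i : {i : ι // i ∈ VarBlk j \ insert V C}) → X i.1) →
      (∀ i, X i) :=
    fun c y i =>
      if hC : i ∈ C then c ⟨i, hC⟩
      else if hV : i = V then cast (congrArg X hV.symm) v
      else y (J i hV hC)
        ⟨i, Finset.mem_sdiff.mpr ⟨hJmem i hV hC, by simp [hV, hC]⟩⟩
  have hbackV : ∀ c y, back c y V = v := by
    intro c y
    simp [back, hVC]
  let T := ((i : {i : ι // i ∈ C}) → X i.1) ×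
      ((j : Fin n) → (i : {i : ι // i ∈ VarBlk j \ insert V C}) → X i.1)
  let F : T → {x : ∀ i, X i // x V = v} := fun p => ⟨back p.1 p.2, hbackV p.1 p.2⟩
  let G : {x : ∀ i, X i // x V = v} → T :=
    fun x => (fun i => x.1 i.1, fun j i => x.1 i.1)
  have hGF : ∀ p, G (F p) = p := by
    rintro ⟨c, y⟩
    simp only [G, F]
    refine Prod.ext ?_ ?_
    · funext i
      simp only [back, dif_pos i.2]
    · funext j i
      obtain ⟨i, hi⟩ := i
      have hi' := Finset.mem_sdiff.mp hi
      have hC : i ∉ C := fun h => hi'.2 (Finset.mem_insert.mpr (Or.inr h))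
      have hV : i ≠ V := fun h => hi'.2 (Finset.mem_insert.mpr (Or.inl h))
      have hj : j = J i hV hC := hJuniq i hV hC j hi'.1
      subst hj
      simp only [back, dif_neg hC, dif_neg hV]
  have hFG : ∀ x, F (G x) = x := by
    rintro ⟨x, hx⟩
    simp only [F, G]
    refine Subtype.ext ?_
    funext i
    by_cases hC : i ∈ C
    · simp only [back, dif_pos hC]
    · by_cases hV : i = V
      · subst hV
        simp only [back, dif_neg hC, dif_pos rfl, cast_eq]
        exact hx.symm
      · simp only [back, dif_neg hC, dif_neg hV]
  have hbij : Function.Bijective F :=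
    ⟨fun a b h => by rw [← hGF a, h, hGF], fun x => ⟨G x, hFG x⟩⟩
  have key := Fintype.sum_bijective F hbij
    (fun p : T => ∏ k : K, φ k (back p.1 p.2))
    (fun x : {x : ∀ i, X i // x V = v} => ∏ k : K, φ k x.1)
    (fun p => rfl)
  rw [← key, Fintype.sum_prod_type]
  refine Finset.sum_congr rfl fun c _ => ?_
  -- for fixed separator assignment `c`
  have hblock : ∀ (y : (j : Fin n) → (i : {i : ι // i ∈ VarBlk j \ insert V C}) → X i.1),
      ∏ k : K, φ k (back c y) =
        ∏ j : Fin n, ∏ k ∈ Finset.univ.filter (fun k => blk k = j),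
          φ k (glue v c j (y j)) := by
    intro y
    rw [← Finset.prod_fiberwise Finset.univ blk (fun k => φ k (back c y))]
    refine Finset.prod_congr rfl fun j _ => ?_
    refine Finset.prod_congr rfl fun k hk => ?_
    have hkj : blk k = j := (Finset.mem_filter.mp hk).2
    refine hdep k _ _ fun i hi => ?_
    have hiB : i ∈ VarBlk j := by
      rw [hVarBlk]
      exact Finset.mem_biUnion.mpr ⟨k, by simp [hkj], hi⟩
    by_cases hC : i ∈ C
    · rw [hglueC v c j (y j) i hC]
      simp only [back, dif_pos hC]
    · by_cases hV : i = V
      · subst hV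
        rw [hglueV]
        exact hbackV c y
      · have hmem : i ∈ VarBlk j \ insert V C :=
          Finset.mem_sdiff.mpr ⟨hiB, by simp [hV, hC]⟩
        rw [hglueY v c j (y j) i hmem]
        have hj : j = J i hV hC := hJuniq i hV hC j hiB
        subst hj
        simp only [back, dif_neg hC, dif_neg hV]
  calc (∑ y : (j : Fin n) → (i : {i : ι // i ∈ VarBlk j \ insert V C}) → X i.1,
          ∏ k : K, φ k (back c y))
      = ∑ y : (j : Fin n) → (i : {i : ι // i ∈ VarBlk j \ insert V C}) → X i.1,
          ∏ j : Fin n, ∏ k ∈ Finset.univ.filter (fun k => blk k = j),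
            φ k (glue v c j (y j)) := Finset.sum_congr rfl fun y _ => hblock y
    _ = ∏ j : Fin n,
          ∑ y : (i : {i : ι // i ∈ VarBlk j \ insert V C}) → X i.1,
            ∏ k ∈ Finset.univ.filter (fun k => blk k = j),
              φ k (glue v c j y) := by
        rw [Finset.prod_univ_sum]
        rw [Fintype.piFinset_univ]
end
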